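/- Define W = Σ_{i=1}^m P_i ⊗ X_i + v v† ⊗ I on ℂ^m ⊗ ℂ^n, where P_i = e_i e_i† for an orthonormal basis e_1,…,e_m, v = Σ_k k e_k, and X_1,…,X_m are traceless Hermitian operators on ℂ^n such that X_1,…,X_m, I are linearly independent and the only unitaries commuting with all X_i are scalars. Then any U ⊗ V ∈ U(m) ⊗ U(n) satisfying (U ⊗ V) W (U† ⊗ V†) = W has U and V both scalar multiples of the identity. -/

import Mathlib

/-!
Conjugating by the unitary `E` whose columns are the `eᵢ` brings everything to the standard
basis: with `u = E† U E` and `w = u v₀`, `v₀ = (1, …, m)`, the `(j, k)` block of the stability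
equation reads `∑ᵢ u_{ji} ū_{ki} V Xᵢ V† + w_j w̄_k I = δ_{jk} X_j + (j+1)(k+1) I`.
The `Xᵢ` are traceless, so traces give `w w† = v₀ v₀†`, and then the complex linear independence
of the Hermitian `Xᵢ` gives `u_{ji} ū_{ki} = 0` for `j ≠ k`: each column of the unitary `u` has
a single nonzero entry, of modulus one. As the `|w_j| = j + 1` are distinct, `u` is diagonal,
and `w w† = v₀ v₀†` makes its diagonal constant. The diagonal blocks then read
`V Xⱼ V† = Xⱼ`, so `V` is scalar.
-/

open Matrix Kronecker

namespace Matrix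

theorem linearIndependent_complex_of_isHermitian {ι κ : Type*} [Fintype κ]
    {H : ι → Matrix κ κ ℂ} (hH : ∀ i, (H i).IsHermitian) (hli : LinearIndependent ℝ H) :
    LinearIndependent ℂ H := by
  rw [linearIndependent_iff'] at hli ⊢
  -- Adding its conjugate transpose to a complex relation gives a real one on the real parts;
  -- the imaginary parts are the real parts of `I •` the relation.
  have hre (s : Finset ι) (g : ι → ℂ) (hg : ∑ i ∈ s, g i • H i = 0) :
      ∀ i ∈ s, (g i).re = 0 := by
    have hconj : ∑ i ∈ s, star (g i) • H i = 0 := by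
      simpa [conjTranspose_sum, conjTranspose_smul, (hH _).eq] using congrArg conjTranspose hg
    have h2re : ∑ i ∈ s, (2 * (g i).re) • H i = 0 := by
      calc ∑ i ∈ s, (2 * (g i).re) • H i = ∑ i ∈ s, (g i • H i + star (g i) • H i) := by
            refine Finset.sum_congr rfl fun i _ => ?_
            rw [← add_smul, Complex.star_def, Complex.add_conj, Complex.coe_smul]
        _ = 0 := by rw [Finset.sum_add_distrib, hg, hconj, add_zero]
    intro i hi
    simpa using hli s _ h2re i hi
  intro s g hg i hi
  have hIg : ∑ i ∈ s, (Complex.I * g i) • H i = 0 := by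
    simp_rw [← smul_smul, ← Finset.smul_sum, hg, smul_zero]
  exact Complex.ext (hre s g hg i hi) (by simpa using hre s _ hIg i hi)

theorem linearIndependent_conj_of_mem_unitaryGroup {ι κ 𝕜 : Type*} [Fintype κ] [DecidableEq κ]
    [RCLike 𝕜] {X : ι → Matrix κ κ 𝕜} (hX : LinearIndependent 𝕜 X) {V : Matrix κ κ 𝕜}
    (hV : V ∈ unitaryGroup κ 𝕜) : LinearIndependent 𝕜 fun i => V * X i * Vᴴ :=
  hX.map' (Unitary.conjStarAlgAut 𝕜 _ ⟨V, hV⟩).toAlgEquiv.toLinearEquiv.toLinearMap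
    (LinearEquiv.ker _)

theorem eq_and_eq_of_add_smul_one_eq {κ 𝕜 : Type*} [Fintype κ] [DecidableEq κ] [Nonempty κ]
    [Field 𝕜] [CharZero 𝕜] {A B : Matrix κ κ 𝕜} {α β : 𝕜} (hA : A.trace = 0)
    (hB : B.trace = 0) (h : A + α • 1 = B + β • 1) : A = B ∧ α = β := by
  have hαβ : α = β := by
    have htr := congrArg trace h
    simp only [trace_add, trace_smul, trace_one, hA, hB, zero_add, smul_eq_mul] at htr
    exact mul_right_cancel₀ (Nat.cast_ne_zero.mpr Fintype.card_ne_zero) htr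
  exact ⟨add_right_cancel (hαβ ▸ h), hαβ⟩

section Unitary

variable {𝕜 ι : Type*} [RCLike 𝕜] [Fintype ι] [DecidableEq ι] {u : Matrix ι ι 𝕜}

theorem transpose_of_mem_unitaryGroup {e : ι → ι → 𝕜}
    (he : ∀ i j, star (e i) ⬝ᵥ e j = if i = j then 1 else 0) : (of e)ᵀ ∈ unitaryGroup ι 𝕜 := by
  rw [mem_unitaryGroup_iff', star_eq_conjTranspose]
  ext i j
  simpa [mul_apply, dotProduct, one_apply] using he i j

theorem trace_mul_mul_conjTranspose_of_mem_unitaryGroup {V : Matrix ι ι 𝕜}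
    (hV : V ∈ unitaryGroup ι 𝕜) (X : Matrix ι ι 𝕜) : (V * X * Vᴴ).trace = X.trace := by
  rw [trace_mul_cycle, ← star_eq_conjTranspose, Unitary.star_mul_self_of_mem hV, Matrix.one_mul]

theorem eq_smul_one_of_conjTranspose_mul_mul_eq {E U : Matrix ι ι 𝕜} (hE : E ∈ unitaryGroup ι 𝕜)
    {c : 𝕜} (h : Eᴴ * U * E = c • 1) : U = c • 1 := by
  have hEE : E * Eᴴ = 1 := Unitary.mul_star_self_of_mem hE
  calc U = E * (Eᴴ * U * E) * Eᴴ := by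
        rw [← Matrix.mul_assoc, ← Matrix.mul_assoc, hEE, Matrix.one_mul, Matrix.mul_assoc, hEE,
          Matrix.mul_one]
    _ = c • 1 := by rw [h, Matrix.mul_smul, Matrix.mul_one, Matrix.smul_mul, hEE]

theorem norm_eq_one_of_smul_one_mem_unitaryGroup [Nonempty ι] {c : 𝕜}
    (h : c • (1 : Matrix ι ι 𝕜) ∈ unitaryGroup ι 𝕜) : ‖c‖ = 1 := by
  obtain ⟨i⟩ := ‹Nonempty ι›
  have hi : (star (c • 1) * (c • 1) : Matrix ι ι 𝕜) i i = (1 : Matrix ι ι 𝕜) i i := by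
    rw [Unitary.star_mul_self_of_mem h]
  simp only [star_smul, star_one, smul_mul_smul_comm, mul_one, smul_apply, one_apply_eq,
    smul_eq_mul, RCLike.star_def, RCLike.conj_mul] at hi
  exact (pow_eq_one_iff_of_nonneg (norm_nonneg c) two_ne_zero).mp (by exact_mod_cast hi)

theorem sum_norm_sq_col_of_mem_unitaryGroup (hu : u ∈ unitaryGroup ι 𝕜) (i : ι) :
    ∑ k, ‖u k i‖ ^ 2 = 1 := by
  have hi : (star u * u) i i = (1 : Matrix ι ι 𝕜) i i := by rw [Unitary.star_mul_self_of_mem hu]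
  simp only [star_eq_conjTranspose, mul_apply, conjTranspose_apply, one_apply_eq,
    RCLike.star_def, RCLike.conj_mul] at hi
  exact_mod_cast hi

theorem sum_norm_sq_row_of_mem_unitaryGroup (hu : u ∈ unitaryGroup ι 𝕜) (j : ι) :
    ∑ i, ‖u j i‖ ^ 2 = 1 := by
  simpa [star_eq_conjTranspose] using
    sum_norm_sq_col_of_mem_unitaryGroup (Unitary.star_mem hu) j

theorem norm_eq_one_and_row_eq_zero_of_isDiag_vecMulVec_col (hu : u ∈ unitaryGroup ι 𝕜)
    (hcol : ∀ i, (vecMulVec (u.col i) (star (u.col i))).IsDiag) {i j : ι} (h : u j i ≠ 0) :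
    ‖u j i‖ = 1 ∧ ∀ i', i' ≠ i → u j i' = 0 := by
  have hcol_j (k : ι) (hk : k ≠ j) : u k i = 0 := by
    simpa [vecMulVec_apply, col, h] using hcol i hk
  have hsq : ‖u j i‖ ^ 2 = 1 := by
    rw [← sum_norm_sq_col_of_mem_unitaryGroup hu i,
      Finset.sum_eq_single j (fun k _ hk => by simp [hcol_j k hk]) (by simp)]
  refine ⟨(pow_eq_one_iff_of_nonneg (norm_nonneg _) two_ne_zero).mp hsq, fun i' hi' => ?_⟩
  have hrow := sum_norm_sq_row_of_mem_unitaryGroup hu j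
  rw [← Finset.add_sum_erase _ _ (Finset.mem_univ i), hsq, add_eq_left,
    Finset.sum_eq_zero_iff_of_nonneg (fun _ _ => sq_nonneg _)] at hrow
  simpa using hrow i' (Finset.mem_erase.mpr ⟨hi', Finset.mem_univ _⟩)

theorem exists_eq_smul_one_of_isDiag_of_vecMulVec_eq (hu : u ∈ unitaryGroup ι 𝕜)
    (hcol : ∀ i, (vecMulVec (u.col i) (star (u.col i))).IsDiag) {d : ι → ℝ}
    (hd : Function.Injective d) (hpos : ∀ i, 0 < d i)
    (hw : vecMulVec (u *ᵥ fun i => (d i : 𝕜)) (star (u *ᵥ fun i => (d i : 𝕜))) =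
      vecMulVec (fun i => (d i : 𝕜)) (star fun i => (d i : 𝕜))) :
    ∃ c : 𝕜, ‖c‖ = 1 ∧ u = c • 1 := by
  set w := u *ᵥ fun i => (d i : 𝕜)
  have hwjk (j k : ι) : w j * star (w k) = d j * d k := by
    simpa [vecMulVec_apply] using Matrix.ext_iff.mpr hw j k
  have hnorm_w (j : ι) : ‖w j‖ = d j := by
    have h := hwjk j j
    rw [RCLike.star_def, RCLike.mul_conj] at h
    have h' : ‖w j‖ ^ 2 = d j ^ 2 := by exact_mod_cast h.trans (sq _).symm
    exact (pow_left_inj₀ (norm_nonneg _) (hpos j).le two_ne_zero).mp h'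
  have hisol {i j : ι} (h : u j i ≠ 0) :=
    norm_eq_one_and_row_eq_zero_of_isDiag_vecMulVec_col hu hcol h
  have hw_single {j i : ι} (h : u j i ≠ 0) : w j = u j i * d i :=
    Finset.sum_eq_single i (fun i' _ hi' => by simp [(hisol h).2 i' hi']) (by simp)
  have hdiag {j i : ι} (h : u j i ≠ 0) : j = i := by
    apply hd
    rw [← hnorm_w, hw_single h, norm_mul, (hisol h).1, one_mul, RCLike.norm_ofReal,
      abs_of_pos (hpos i)]
  have hne (i : ι) : u i i ≠ 0 := by
    obtain ⟨k, -, hk⟩ := Finset.exists_ne_zero_of_sum_ne_zero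
      ((sum_norm_sq_col_of_mem_unitaryGroup hu i).symm ▸ one_ne_zero)
    have hk' : u k i ≠ 0 := by simpa using hk
    rwa [hdiag hk'] at hk'
  have hconst (j k : ι) : u j j = u k k := by
    have h := hwjk j k
    rw [hw_single (hne j), hw_single (hne k), star_mul', RCLike.star_def,
      RCLike.conj_ofReal] at h
    have hjk : u j j * star (u k k) = 1 := by
      rw [RCLike.star_def]
      refine mul_left_cancel₀ (mul_ne_zero (RCLike.ofReal_ne_zero.mpr (hpos j).ne')
        (RCLike.ofReal_ne_zero.mpr (hpos k).ne')) ?_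
      linear_combination h
    have hkk : u k k * star (u k k) = 1 := by
      rw [RCLike.star_def, RCLike.mul_conj, (hisol (hne k)).1]
      simp
    linear_combination u k k * hjk - u j j * hkk
  rcases isEmpty_or_nonempty ι with hι | ⟨⟨i₀⟩⟩
  · exact ⟨1, norm_one, Subsingleton.elim _ _⟩
  refine ⟨u i₀ i₀, (hisol (hne i₀)).1, ?_⟩
  ext j k
  by_cases hjk : j = k
  · subst hjk
    simp [hconst j i₀]
  · simpa [one_apply_ne hjk] using mt hdiag hjk

end Unitary

section RankOneKroneckerSum

variable {R ι κ μ ν : Type*} [CommRing R] [StarRing R] [Fintype ι] [DecidableEq κ]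

def rankOneKroneckerSum (A : Matrix μ ι R) (b : μ → R) (X : ι → Matrix κ κ R) :
    Matrix (μ × κ) (μ × κ) R :=
  ∑ i, vecMulVec (A.col i) (star (A.col i)) ⊗ₖ X i + vecMulVec b (star b) ⊗ₖ 1

theorem mul_vecMulVec_star_mul_conjTranspose [Fintype μ] (M : Matrix ν μ R) (x : μ → R) :
    M * vecMulVec x (star x) * Mᴴ = vecMulVec (M *ᵥ x) (star (M *ᵥ x)) := by
  rw [mul_vecMulVec, vecMulVec_mul, star_mulVec]

theorem kronecker_mul_rankOneKroneckerSum_mul_conjTranspose [Fintype μ] [Fintype κ]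
    {B : Matrix κ κ R} (hB : B * Bᴴ = 1) (M : Matrix ν μ R) (A : Matrix μ ι R) (b : μ → R)
    (X : ι → Matrix κ κ R) :
    (M ⊗ₖ B) * rankOneKroneckerSum A b X * (M ⊗ₖ B)ᴴ =
      rankOneKroneckerSum (M * A) (M *ᵥ b) (fun i => B * X i * Bᴴ) := by
  have hcol (i : ι) : (M * A).col i = M *ᵥ A.col i := by
    ext; simp [col, mul_apply, mulVec, dotProduct]
  simp only [rankOneKroneckerSum, conjTranspose_kronecker, Matrix.mul_add, Matrix.add_mul,
    Matrix.mul_sum, Matrix.sum_mul, ← mul_kronecker_mul, mul_vecMulVec_star_mul_conjTranspose,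
    hcol, Matrix.mul_one, hB]

theorem submatrix_rankOneKroneckerSum (A : Matrix μ ι R) (b : μ → R) (X : ι → Matrix κ κ R)
    (j k : μ) :
    (rankOneKroneckerSum A b X).submatrix (Prod.mk j) (Prod.mk k) =
      ∑ i, (A j i * star (A k i)) • X i + (b j * star (b k)) • 1 := by
  ext r s
  simp [rankOneKroneckerSum, Matrix.sum_apply, vecMulVec_apply, col]

theorem rankOneKroneckerSum_transpose_of [Fintype μ] (e : μ → μ → R) (c : μ → R)
    (X : μ → Matrix κ κ R) :
    rankOneKroneckerSum (of e)ᵀ ((of e)ᵀ *ᵥ c) X =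
      ∑ i, vecMulVec (e i) (star (e i)) ⊗ₖ X i +
        vecMulVec (∑ k, c k • e k) (star (∑ k, c k • e k)) ⊗ₖ 1 := by
  have hc : (of e)ᵀ *ᵥ c = ∑ k, c k • e k := by
    ext x
    simp [mulVec, dotProduct, Finset.sum_apply, mul_comm]
  rw [rankOneKroneckerSum, hc]
  rfl

theorem rankOneKroneckerSum_eq_of_kronecker_conj_eq [Fintype μ] [DecidableEq μ] [Fintype κ]
    {E U : Matrix μ μ R} {V : Matrix κ κ R} (hE : E ∈ unitaryGroup μ R)
    (hV : V ∈ unitaryGroup κ R) {b : μ → R} {X : μ → Matrix κ κ R}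
    (h : (U ⊗ₖ V) * rankOneKroneckerSum E (E *ᵥ b) X * (U ⊗ₖ V)ᴴ =
      rankOneKroneckerSum E (E *ᵥ b) X) :
    rankOneKroneckerSum (Eᴴ * U * E) ((Eᴴ * U * E) *ᵥ b) (fun i => V * X i * Vᴴ) =
      rankOneKroneckerSum 1 b X := by
  rw [kronecker_mul_rankOneKroneckerSum_mul_conjTranspose (Unitary.mul_star_self_of_mem hV)]
    at h
  have h' := congrArg (fun M => (Eᴴ ⊗ₖ (1 : Matrix κ κ R)) * M * (Eᴴ ⊗ₖ 1)ᴴ) h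
  have h1 : (1 : Matrix κ κ R) * 1ᴴ = 1 := by simp
  simp only [kronecker_mul_rankOneKroneckerSum_mul_conjTranspose h1] at h'
  have hEE : Eᴴ * E = 1 := Unitary.star_mul_self_of_mem hE
  simpa [Matrix.mul_assoc, hEE] using h'

theorem sum_smul_eq_and_mul_star_eq_of_rankOneKroneckerSum_eq {𝕜 : Type*} [Field 𝕜]
    [StarRing 𝕜] [CharZero 𝕜] [DecidableEq ι] [Fintype κ] [Nonempty κ] {A : Matrix ι ι 𝕜}
    {w b : ι → 𝕜} {X Y : ι → Matrix κ κ 𝕜} (hX : ∀ i, (X i).trace = 0)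
    (hY : ∀ i, (Y i).trace = 0) (h : rankOneKroneckerSum A w Y = rankOneKroneckerSum 1 b X)
    (j k : ι) :
    ∑ i, (A j i * star (A k i)) • Y i = (if j = k then X j else 0) ∧
      w j * star (w k) = b j * star (b k) := by
  have hjk := congrArg (submatrix · (Prod.mk j) (Prod.mk k)) h
  have hstd : ∑ i, ((1 : Matrix ι ι 𝕜) j i * star ((1 : Matrix ι ι 𝕜) k i)) • X i =
      if j = k then X j else 0 := by
    rcases eq_or_ne j k with rfl | hjk
    · simp [one_apply]
    · simp [one_apply, hjk, hjk.symm]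
  simp only [submatrix_rankOneKroneckerSum, hstd] at hjk
  refine eq_and_eq_of_add_smul_one_eq ?_ ?_ hjk
  · simp [trace_sum, hY]
  · split_ifs <;> simp [hX]

end RankOneKroneckerSum

end Matrix

/-- With `W = ∑ i, P i ⊗ₖ X i + v vᴴ ⊗ₖ 1` built from an orthonormal basis
`e`, `v = ∑ k, (k+1) • e k`, and traceless Hermitian `X i` such that `1, X 1, …, X m` are
`ℝ`-linearly independent and only scalar unitaries commute with all `X i`, every
`U ⊗ V ∈ U(m) ⊗ U(n)` stabilizing `W` under conjugation has `U` and `V` scalar. -/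
theorem stmt_8 (m n : ℕ) (e : Fin m → (Fin m → ℂ))
    (he : ∀ i j, star (e i) ⬝ᵥ e j = if i = j then 1 else 0)
    (P : Fin m → Matrix (Fin m) (Fin m) ℂ)
    (hP : ∀ i, P i = vecMulVec (e i) (star (e i)))
    (v : Fin m → ℂ) (hv : v = ∑ k : Fin m, ((k.1 + 1 : ℕ) : ℂ) • e k)
    (X : Fin m → Matrix (Fin n) (Fin n) ℂ)
    (hXh : ∀ i, (X i).IsHermitian) (hXtr : ∀ i, (X i).trace = 0)
    (hXli : LinearIndependent ℝ (Fin.cons (1 : Matrix (Fin n) (Fin n) ℂ) X))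
    (hXcent : ∀ V ∈ Matrix.unitaryGroup (Fin n) ℂ,
      (∀ i, V * X i * Vᴴ = X i) → ∃ c : ℂ, V = c • (1 : Matrix (Fin n) (Fin n) ℂ))
    (W : Matrix (Fin m × Fin n) (Fin m × Fin n) ℂ)
    (hW : W = ∑ i, P i ⊗ₖ X i + vecMulVec v (star v) ⊗ₖ (1 : Matrix (Fin n) (Fin n) ℂ))
    (U : Matrix (Fin m) (Fin m) ℂ) (hU : U ∈ Matrix.unitaryGroup (Fin m) ℂ)
    (V : Matrix (Fin n) (Fin n) ℂ) (hV : V ∈ Matrix.unitaryGroup (Fin n) ℂ)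
    (hstab : (U ⊗ₖ V) * W * (Uᴴ ⊗ₖ Vᴴ) = W) :
    (∃ a : ℂ, ‖a‖ = 1 ∧ U = a • (1 : Matrix (Fin m) (Fin m) ℂ)) ∧
    (∃ b : ℂ, ‖b‖ = 1 ∧ V = b • (1 : Matrix (Fin n) (Fin n) ℂ)) := by
  have : Nonempty (Fin n) := by
    by_contra h
    rw [not_nonempty_iff] at h
    exact hXli.ne_zero 0 (Subsingleton.elim _ _)
  set E : Matrix (Fin m) (Fin m) ℂ := (of e)ᵀ
  have hE : E ∈ unitaryGroup (Fin m) ℂ := transpose_of_mem_unitaryGroup he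
  set d : Fin m → ℝ := fun k => (k.1 + 1 : ℕ)
  have hWE : W = rankOneKroneckerSum E (E *ᵥ fun k => (d k : ℂ)) X := by
    simp [E, d, rankOneKroneckerSum_transpose_of, hW, hv, hP]
  have hblock := sum_smul_eq_and_mul_star_eq_of_rankOneKroneckerSum_eq hXtr
    (fun i => (trace_mul_mul_conjTranspose_of_mem_unitaryGroup hV _).trans (hXtr i))
    (rankOneKroneckerSum_eq_of_kronecker_conj_eq hE hV
      (by rw [← hWE, conjTranspose_kronecker, hstab]))
  have hY : LinearIndependent ℂ fun i => V * X i * Vᴴ :=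
    linearIndependent_conj_of_mem_unitaryGroup (linearIndependent_complex_of_isHermitian hXh
      (hXli.comp Fin.succ (Fin.succ_injective _))) hV
  set u := Eᴴ * U * E
  have hcol (i : Fin m) : (vecMulVec (u.col i) (star (u.col i))).IsDiag := fun j k hjk =>
    Fintype.linearIndependent_iff.mp hY _ (by simpa [hjk] using (hblock j k).1) i
  have hu_mem : u ∈ unitaryGroup (Fin m) ℂ := mul_mem (mul_mem (Unitary.star_mem hE) hU) hE
  obtain ⟨c, hc, hu⟩ := exists_eq_smul_one_of_isDiag_of_vecMulVec_eq hu_mem hcol (d := d)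
    (fun i j hij => by simpa [d, Fin.ext_iff] using hij) (fun k => by positivity)
    (by ext j k; exact (hblock j k).2)
  refine ⟨⟨c, hc, eq_smul_one_of_conjTranspose_mul_mul_eq hE hu⟩, ?_⟩
  obtain ⟨b, rfl⟩ := hXcent V hV fun i => by
    simpa [hu, one_apply, Complex.mul_conj, Complex.normSq_eq_norm_sq, hc] using (hblock i i).1
  exact ⟨b, norm_eq_one_of_smul_one_mem_unitaryGroup hV, rfl⟩
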